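/- There exist δ0 > 0 and n0 ∈ ℕ such that the following holds for all 0 < δ ≤ δ0 and n ≥ n0. Assume the Setup and the triangle-set definitions, and assume |D̄| ≤ 8δn. Then |ℬ2| ≤ n·|D̄|/3. -/

import Mathlib

open SimpleGraph

/-- The number of triangles (copies of `K₃`) in a graph `G`, i.e. `N(K₃, G)`. -/
noncomputable def triangleCount {V : Type*} (G : SimpleGraph V) : ℕ :=
  Set.ncard {s : Finset V | G.IsNClique 3 s}

/-- `G` contains a subgraph isomorphic to `H`. -/
def Contains {W V : Type*} (H : SimpleGraph W) (G : SimpleGraph V) : Prop :=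
  ∃ f : H →g G, Function.Injective f

/-- `G` is `H`-free: it contains no subgraph isomorphic to `H`. -/
def Free {W V : Type*} (H : SimpleGraph W) (G : SimpleGraph V) : Prop :=
  ¬ Contains H G

/-- The expansion `F^△` of a graph `F`: each edge `uv` of `F` is replaced by a triangle
`u v w_{uv}` where the new vertices `w_{uv}` are pairwise distinct and outside `V(F)`. -/
def expansion {V : Type*} (F : SimpleGraph V) : SimpleGraph (V ⊕ F.edgeSet) :=
  SimpleGraph.fromRel (fun a b =>
    (∃ u v, a = Sum.inl u ∧ b = Sum.inl v ∧ F.Adj u v) ∨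
    (∃ u, ∃ e : F.edgeSet, a = Sum.inl u ∧ b = Sum.inr e ∧ u ∈ (e : Sym2 V)))

/-- `C₄^△`, the expansion of the 4-edge cycle: a graph on 8 vertices. -/
def C4expansion : SimpleGraph ((Fin 4) ⊕ (SimpleGraph.cycleGraph 4).edgeSet) :=
  expansion (SimpleGraph.cycleGraph 4)

/-- The generalized Turán number `ex(n, K₃, H)`: the maximum number of triangles in an
`H`-free graph on `n` vertices. -/
noncomputable def exTriangles (n : ℕ) {W : Type*} (H : SimpleGraph W) : ℕ :=
  sSup {k | ∃ G : SimpleGraph (Fin n), _root_.Free H G ∧ triangleCount G = k}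

/-- `T(n)`: the complete bipartite graph on `Fin n` with parts
`X = {v : v < ⌊n/2⌋}` (of size `⌊n/2⌋`) and `Y = {v : v ≥ ⌊n/2⌋}` (of size `⌈n/2⌉`). -/
def Tgraph (n : ℕ) : SimpleGraph (Fin n) :=
  SimpleGraph.fromRel (fun u v => u.val < n / 2 ∧ n / 2 ≤ v.val)

/-- `T⁺(n)`: the graph `T(n)` with one extra edge (between vertices `0` and `1`) added
inside the part `X`. -/
def TgraphPlus (n : ℕ) : SimpleGraph (Fin n) :=
  SimpleGraph.fromRel (fun u v =>
    (u.val < n / 2 ∧ n / 2 ≤ v.val) ∨ (u.val = 0 ∧ v.val = 1))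

/-- `T⁼(n)`: the graph obtained from `T(n)` by adding the edge `e₁ = {0,1}` inside `X`,
adding the edge `e₂ = {⌊n/2⌋, ⌊n/2⌋+1}` inside `Y`, and deleting the perfect matching
`{0,⌊n/2⌋}, {1,⌊n/2⌋+1}` between the endpoints of `e₁` and of `e₂`. -/
def TgraphEq (n : ℕ) : SimpleGraph (Fin n) :=
  SimpleGraph.fromRel (fun u v =>
    (u.val < n / 2 ∧ n / 2 ≤ v.val ∧
      ¬(u.val = 0 ∧ v.val = n / 2) ∧ ¬(u.val = 1 ∧ v.val = n / 2 + 1))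
    ∨ (u.val = 0 ∧ v.val = 1) ∨ (u.val = n / 2 ∧ v.val = n / 2 + 1))

/-- The join `K₁ ⋈ H` of a single new vertex with the graph `H`. -/
def joinK1 {V : Type*} (H : SimpleGraph V) : SimpleGraph (Option V) :=
  SimpleGraph.fromRel (fun u v =>
    u = none ∨ ∃ a b, u = some a ∧ v = some b ∧ H.Adj a b)

/-- `S(n) = K₁ ⋈ T(n-1)`. -/
def Sgraph (n : ℕ) : SimpleGraph (Option (Fin (n - 1))) := joinK1 (Tgraph (n - 1))

/-- `S⁺(n) = K₁ ⋈ T⁺(n-1)`. -/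
def SgraphPlus (n : ℕ) : SimpleGraph (Option (Fin (n - 1))) := joinK1 (TgraphPlus (n - 1))

/-- `S⁼(n) = K₁ ⋈ T⁼(n-1)`. -/
def SgraphEq (n : ℕ) : SimpleGraph (Option (Fin (n - 1))) := joinK1 (TgraphEq (n - 1))

/-- `d_G(uv)`: the number of triangles of `G` containing the edge `uv`, i.e. the number of
common neighbors of `u` and `v`. -/
noncomputable def edgeTriangleDeg {V : Type*} (G : SimpleGraph V) (u v : V) : ℕ :=
  {w : V | G.Adj u w ∧ G.Adj v w}.ncard

/-- `e_G(A, B)`: the number of edges of `G` with one endpoint in `A` and the other in `B`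
(for disjoint `A`, `B`). -/
noncomputable def crossEdges {V : Type*} (G : SimpleGraph V) (A B : Set V) : ℕ :=
  {p : V × V | p.1 ∈ A ∧ p.2 ∈ B ∧ G.Adj p.1 p.2}.ncard


/-!
Fix `u ∈ D̄`. A triangle of `ℬ₂` through `u` is `u v w` with `v ∈ D̄` and `w ∉ D̄`, so it is
determined by the pair `(v, w)`; at most `|D̄|` pairs have `w = x`. For the others `w ∈ D`, so
`xw` lies in many triangles, and two pairs `(v, w)`, `(v', w')` with `v ≠ v'`, `w ≠ w'` would
give a `C₄^△` on the cycle `x w u w'` (apexes `v`, `v'` and fresh common neighbours of `x, w` and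
of `x, w'`). Hence all these pairs share `w` (at most `|D̄|` of them) or all share `v`. In the
latter case the `w`'s are common neighbours of `u` and `v` in `D`; if there are at least three,
they are independent, since an edge `w w'` and a third `w''` give the same configuration on
`x w u w''` with apexes `w'` and `v`. An independent set has at most `n/2 + 2√(2δ) n` vertices
because the cut `(V₁, V₂)` is nearly complete and nearly balanced. So each `u ∈ D̄` lies in at
most `|D̄| + n/2 + 2√(2δ) n ≤ 2n/3` triangles of `ℬ₂`, while each triangle of `ℬ₂` has two
vertices in `D̄`.
-/

open Finset

theorem Set.fst_eq_or_snd_eq_of_pairwise {α β : Type*} {Q : Set (α × β)}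
    (h : ∀ p ∈ Q, ∀ q ∈ Q, p.1 = q.1 ∨ p.2 = q.2) :
    (∀ p ∈ Q, ∀ q ∈ Q, p.1 = q.1) ∨ ∀ p ∈ Q, ∀ q ∈ Q, p.2 = q.2 := by
  by_contra! ⟨⟨p, hp, q, hq, hpq⟩, r, hr, t, ht, hrt⟩
  have := h p hp q hq; have := h p hp r hr; have := h q hq r hr
  have := h p hp t ht; have := h q hq t ht
  grind

theorem Finset.exists_eq_triple_of_card_inter_eq_two {α : Type*} [DecidableEq α] {s A : Finset α}
    {u : α} (hs : #s = 3) (hsA : #(s ∩ A) = 2) (hu : u ∈ s) (huA : u ∈ A) :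
    ∃ v ∈ A, ∃ w ∉ A, s = {u, v, w} := by
  obtain ⟨v, hv⟩ : ((s ∩ A).erase u).Nonempty := by
    rw [← card_pos, card_erase_of_mem (mem_inter.2 ⟨hu, huA⟩)]; omega
  obtain ⟨w, hw⟩ : (s \ A).Nonempty := by
    rw [← card_pos]; have := card_inter_add_card_sdiff s A; omega
  obtain ⟨hvu, hvs, hvA⟩ : v ≠ u ∧ v ∈ s ∧ v ∈ A := by simpa using hv
  obtain ⟨hws, hwA⟩ := mem_sdiff.1 hw
  refine ⟨v, hvA, w, hwA, (eq_of_subset_of_card_le ?_ ?_).symm⟩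
  · simp [insert_subset_iff, hu, hvs, hws]
  · rw [hs, card_insert_of_notMem, card_pair]
    · rintro rfl; exact hwA hvA
    · simp only [mem_insert, mem_singleton, not_or]
      exact ⟨hvu.symm, by rintro rfl; exact hwA huA⟩

theorem add_le_of_sub_add_mul_le {a b p q n s : ℝ} (hs : 0 ≤ s) (hp : 0 ≤ p) (hq : 0 ≤ q)
    (hpa : p ≤ a) (hqb : q ≤ b) (hab : a + b ≤ n) (h : n ^ 2 / 4 - s ^ 2 * n ^ 2 + p * q ≤ a * b) :
    p + q ≤ n / 2 + 2 * s * n := by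
  have hsn : 0 ≤ s * n := mul_nonneg hs (by linarith)
  have hpq : p * q ≤ (s * n) ^ 2 := by nlinarith [sq_nonneg (a - b)]
  obtain ⟨hlo, hhi⟩ :=
    abs_le_of_sq_le_sq' (a := a - b) (b := 2 * s * n) (by nlinarith) (by linarith)
  rcases le_or_gt p (s * n) with hp' | hp'
  · linarith
  · have : q ≤ s * n := by nlinarith
    linarith

section
variable {V : Type*} {G : SimpleGraph V}

theorem crossEdges_add_ncard_mul_ncard_le [Finite V] {A B I : Set V} (hI : G.IsIndepSet I) :
    crossEdges G A B + (I ∩ A).ncard * (I ∩ B).ncard ≤ A.ncard * B.ncard := by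
  rw [crossEdges, ← Set.ncard_prod, ← Set.ncard_prod, ← Set.ncard_union_eq]
  · refine Set.ncard_le_ncard (Set.union_subset ?_ ?_)
    · exact fun p hp => ⟨hp.1, hp.2.1⟩
    · exact Set.prod_mono Set.inter_subset_right Set.inter_subset_right
  · refine Set.disjoint_left.2 fun p hp hpI => ?_
    exact hI hpI.1.1 hpI.2.1 hp.2.2.ne hp.2.2

theorem ncard_le_of_isIndepSet [Finite V] {A B I : Set V} {n s : ℝ} (hs : 0 ≤ s)
    (hAB : (A.ncard + B.ncard : ℝ) ≤ n) (hcut : n ^ 2 / 4 - s ^ 2 * n ^ 2 ≤ crossEdges G A B)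
    (hI : G.IsIndepSet I) (hIAB : I ⊆ A ∪ B) : (I.ncard : ℝ) ≤ n / 2 + 2 * s * n := by
  have hsplit : I.ncard ≤ (I ∩ A).ncard + (I ∩ B).ncard := by
    calc I.ncard = (I ∩ A ∪ I ∩ B).ncard := by
          rw [← Set.inter_union_distrib_left, Set.inter_eq_left.2 hIAB]
      _ ≤ _ := Set.ncard_union_le _ _
  have hcount : (crossEdges G A B + (I ∩ A).ncard * (I ∩ B).ncard : ℝ) ≤ A.ncard * B.ncard := by
    exact_mod_cast crossEdges_add_ncard_mul_ncard_le hI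
  have hA : (I ∩ A).ncard ≤ A.ncard := Set.ncard_le_ncard Set.inter_subset_right
  have hB : (I ∩ B).ncard ≤ B.ncard := Set.ncard_le_ncard Set.inter_subset_right
  calc (I.ncard : ℝ) ≤ (I ∩ A).ncard + (I ∩ B).ncard := by exact_mod_cast hsplit
    _ ≤ n / 2 + 2 * s * n := add_le_of_sub_add_mul_le hs (by positivity) (by positivity)
        (by exact_mod_cast hA) (by exact_mod_cast hB) hAB (by linarith)

end

namespace C4expansion

-- The edge `s(i, i + 1)` gets index `i`; the value on non-edges is irrelevant.
def edgeIndex : Sym2 (Fin 4) → Fin 4 :=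
  Sym2.lift ⟨fun i j => if j = i + 1 then i else if i = j + 1 then j else 0, by decide⟩

lemma eq_edgeIndex_or_eq_edgeIndex_add_one {e : Sym2 (Fin 4)} (he : e ∈ (cycleGraph 4).edgeSet)
    {i : Fin 4} (hi : i ∈ e) : i = edgeIndex e ∨ i = edgeIndex e + 1 := by
  revert e i; decide

lemma injOn_edgeIndex : Set.InjOn edgeIndex (cycleGraph 4).edgeSet := by
  unfold Set.InjOn; decide

end C4expansion

open C4expansion in
theorem contains_C4expansion {V : Type*} {G : SimpleGraph V} (c a : Fin 4 → V)
    (hc : ∀ i, G.Adj (c i) (c (i + 1))) (ha : ∀ i, G.Adj (a i) (c i) ∧ G.Adj (a i) (c (i + 1)))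
    (hinj : Function.Injective (Sum.elim c a)) : Contains C4expansion G := by
  let idx : (cycleGraph 4).edgeSet → Fin 4 := fun e => edgeIndex e
  have hcycle : ∀ i j, (cycleGraph 4).Adj i j → G.Adj (c i) (c j) := by
    intro i j hij
    rcases cycleGraph_adj.1 hij with h | h
    · rw [sub_eq_iff_eq_add'.1 h]; exact (hc j).symm
    · rw [sub_eq_iff_eq_add'.1 h]; exact hc i
  have hapex : ∀ (e : (cycleGraph 4).edgeSet) i, i ∈ (e : Sym2 (Fin 4)) →
      G.Adj (a (idx e)) (c i) := by
    intro e i hi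
    rcases eq_edgeIndex_or_eq_edgeIndex_add_one e.2 hi with rfl | rfl
    exacts [(ha _).1, (ha _).2]
  refine ⟨⟨Sum.elim c (a ∘ idx), ?_⟩, ?_⟩
  · rintro p q ⟨-, h | h⟩ <;> rcases h with ⟨i, j, rfl, rfl, hij⟩ | ⟨i, e, rfl, rfl, hi⟩
    exacts [hcycle i j hij, (hapex e i hi).symm, (hcycle i j hij).symm, hapex e i hi]
  · change Function.Injective (Sum.elim (c ∘ id) (a ∘ idx))
    rw [← Sum.elim_comp_map]
    exact hinj.comp (Sum.map_injective.2
      ⟨Function.injective_id, fun e f h => Subtype.ext (injOn_edgeIndex e.2 f.2 h)⟩)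

theorem eq_of_free_C4expansion {V : Type*} {G : SimpleGraph V} (hG : _root_.Free C4expansion G)
    {x w u w' a b : V}
    (hxw : G.Adj x w) (hwu : G.Adj w u) (huw' : G.Adj u w') (hw'x : G.Adj w' x)
    (haw : G.Adj a w) (hau : G.Adj a u) (hbu : G.Adj b u) (hbw' : G.Adj b w')
    (hxu : x ≠ u) (hww' : w ≠ w') (hax : a ≠ x) (haw' : a ≠ w') (hbx : b ≠ x) (hbw : b ≠ w)
    (hw : 6 ≤ edgeTriangleDeg G w x) (hw' : 6 ≤ edgeTriangleDeg G w' x) : a = b := by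
  classical
  by_contra hab
  obtain ⟨z, ⟨hwz, hxz⟩, hz⟩ := Set.exists_mem_notMem_of_ncard_lt_ncard
    (s := (({u, w', a, b} : Finset V) : Set V)) (t := {z | G.Adj w z ∧ G.Adj x z}) <| by
      rw [Set.ncard_coe_finset]; exact card_le_four.trans_lt (lt_of_lt_of_le (by norm_num) hw)
  obtain ⟨z', ⟨hw'z', hxz'⟩, hz'⟩ := Set.exists_mem_notMem_of_ncard_lt_ncard
    (s := (({w, u, a, b, z} : Finset V) : Set V)) (t := {z | G.Adj w' z ∧ G.Adj x z}) <| by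
      rw [Set.ncard_coe_finset]; exact card_le_five.trans_lt (lt_of_lt_of_le (by norm_num) hw')
  simp only [coe_insert, coe_singleton, Set.mem_insert_iff, Set.mem_singleton_iff, not_or]
    at hz hz'
  refine hG (contains_C4expansion ![x, w, u, w'] ![z, a, b, z'] ?_ ?_ ?_)
  · intro i; fin_cases i
    exacts [hxw, hwu, huw', hw'x]
  · intro i; fin_cases i
    exacts [⟨hxz.symm, hwz.symm⟩, ⟨haw, hau⟩, ⟨hbu, hbw'⟩, ⟨hw'z'.symm, hxz'.symm⟩]
  · rintro (i | i) (j | j) h <;> fin_cases i <;> fin_cases j <;>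
      first | rfl | (simp at h; grind [SimpleGraph.irrefl])

section LinkPairs
variable {V : Type*} [Fintype V] [DecidableEq V] (G : SimpleGraph V) [DecidableRel G.Adj]

def linkPairs (A : Finset V) (u : V) : Finset (V × V) :=
  {p ∈ A ×ˢ Aᶜ | G.Adj u p.1 ∧ G.Adj u p.2 ∧ G.Adj p.1 p.2}

variable {G} {A : Finset V} {u x : V}

theorem mem_linkPairs {p : V × V} : p ∈ linkPairs G A u ↔
    p.1 ∈ A ∧ p.2 ∉ A ∧ G.Adj u p.1 ∧ G.Adj u p.2 ∧ G.Adj p.1 p.2 := by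
  simp [linkPairs, and_assoc]

theorem card_filter_mem_le_card_linkPairs {T : Finset (Finset V)}
    (hT : ∀ s ∈ T, G.IsNClique 3 s ∧ #(s ∩ A) = 2) (hu : u ∈ A) :
    #{s ∈ T | u ∈ s} ≤ #(linkPairs G A u) := by
  refine (card_le_card fun s hs => ?_).trans (card_image_le (f := fun p => {u, p.1, p.2}))
  obtain ⟨hsT, hus⟩ := mem_filter.1 hs
  obtain ⟨hclique, hcard⟩ := hT s hsT
  obtain ⟨v, hv, w, hw, rfl⟩ := exists_eq_triple_of_card_inter_eq_two hclique.card_eq hcard hus hu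
  exact mem_image.2 ⟨(v, w), mem_linkPairs.2 ⟨hv, hw, is3Clique_triple_iff.1 hclique⟩, rfl⟩

variable (hG : _root_.Free C4expansion G) (hx : x ∉ A)
  (hlarge : ∀ w ∉ A, w ≠ x → G.Adj w x ∧ 6 ≤ edgeTriangleDeg G w x)
include hG hx hlarge

theorem fst_eq_or_snd_eq_of_mem_linkPairs (hu : u ∈ A) {p q : V × V}
    (hp : p ∈ linkPairs G A u) (hq : q ∈ linkPairs G A u) (hpx : p.2 ≠ x) (hqx : q.2 ≠ x) :
    p.1 = q.1 ∨ p.2 = q.2 := by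
  rw [or_iff_not_imp_right]
  intro hpq
  obtain ⟨hp1, hp2, hup1, hup2, hp12⟩ := mem_linkPairs.1 hp
  obtain ⟨hq1, hq2, huq1, huq2, hq12⟩ := mem_linkPairs.1 hq
  obtain ⟨hp2x, hp2d⟩ := hlarge _ hp2 hpx
  obtain ⟨hq2x, hq2d⟩ := hlarge _ hq2 hqx
  exact eq_of_free_C4expansion hG hp2x.symm hup2.symm huq2 hq2x hp12 hup1.symm huq1.symm hq12
    (ne_of_mem_of_not_mem hu hx).symm hpq (ne_of_mem_of_not_mem hp1 hx)
    (ne_of_mem_of_not_mem hp1 hq2) (ne_of_mem_of_not_mem hq1 hx) (ne_of_mem_of_not_mem hq1 hp2)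
    hp2d hq2d

theorem card_commonNeighbors_le (hu : u ∈ A) {v : V} (hv : v ∈ A) (huv : G.Adj u v) {L : ℕ}
    (hL : 2 ≤ L) (hI : ∀ I : Finset V, x ∉ I → G.IsIndepSet ↑I → #I ≤ L) :
    #{w | w ∉ A ∧ w ≠ x ∧ G.Adj u w ∧ G.Adj v w} ≤ L := by
  set P : Finset V := {w | w ∉ A ∧ w ≠ x ∧ G.Adj u w ∧ G.Adj v w}
  have hmem : ∀ {w}, w ∈ P ↔ w ∉ A ∧ w ≠ x ∧ G.Adj u w ∧ G.Adj v w := by simp [P]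
  by_cases hP : #P ≤ 2
  · exact hP.trans hL
  refine hI P (fun h => (hmem.1 h).2.1 rfl) fun w hw w' hw' hww' hadj => ?_
  obtain ⟨w'', hw'', hw''ne⟩ := exists_mem_notMem_of_card_lt_card (s := {w, w'}) (t := P)
    (card_le_two.trans_lt (by omega))
  simp only [mem_insert, mem_singleton, not_or] at hw''ne
  obtain ⟨hwA, hwx, huw, -⟩ := hmem.1 hw
  obtain ⟨hw'A, hw'x, huw', -⟩ := hmem.1 hw'
  obtain ⟨hw''A, hw''x, huw'', hvw''⟩ := hmem.1 hw''
  obtain ⟨hxw, hwd⟩ := hlarge w hwA hwx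
  obtain ⟨hxw'', hw''d⟩ := hlarge w'' hw''A hw''x
  have := eq_of_free_C4expansion hG hxw.symm huw.symm huw'' hxw'' hadj.symm huw'.symm huv.symm
    hvw'' (ne_of_mem_of_not_mem hu hx).symm (Ne.symm hw''ne.1) hw'x (Ne.symm hw''ne.2)
    (ne_of_mem_of_not_mem hv hx) (ne_of_mem_of_not_mem hv hwA) hwd hw''d
  exact hw'A (this ▸ hv)

theorem card_filter_linkPairs_snd_ne_le (hu : u ∈ A) {L : ℕ} (hA : #A ≤ L) (hL : 2 ≤ L)
    (hI : ∀ I : Finset V, x ∉ I → G.IsIndepSet ↑I → #I ≤ L) :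
    #{p ∈ linkPairs G A u | p.2 ≠ x} ≤ L := by
  set Q := {p ∈ linkPairs G A u | p.2 ≠ x}
  have hQ : ∀ p ∈ Q, p ∈ linkPairs G A u ∧ p.2 ≠ x := fun p hp => mem_filter.1 hp
  rcases Set.fst_eq_or_snd_eq_of_pairwise (Q := ↑Q) fun p hp q hq =>
      fst_eq_or_snd_eq_of_mem_linkPairs hG hx hlarge hu (hQ p hp).1 (hQ q hq).1 (hQ p hp).2
        (hQ q hq).2 with hfst | hsnd
  · obtain hQe | ⟨p₀, hp₀⟩ := Q.eq_empty_or_nonempty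
    · simp [hQe]
    obtain ⟨hp₀1, -, hup₀, -⟩ := mem_linkPairs.1 (hQ p₀ hp₀).1
    refine (card_le_card_of_injOn Prod.snd (fun p hp => ?_)
      fun p hp q hq h => Prod.ext (hfst p hp q hq) h).trans
      (card_commonNeighbors_le hG hx hlarge hu hp₀1 hup₀ hL hI)
    obtain ⟨hpQ, hpx⟩ := hQ p hp
    obtain ⟨-, hp2, -, hup2, hp12⟩ := mem_linkPairs.1 hpQ
    simpa [hp2, hpx, hup2, ← hfst p hp p₀ hp₀] using hp12
  · refine (card_le_card_of_injOn Prod.fst (fun p hp => (mem_linkPairs.1 (hQ p hp).1).1)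
      fun p hp q hq h => Prod.ext h (hsnd p hp q hq)).trans hA

theorem card_linkPairs_le (hu : u ∈ A) {L : ℕ} (hA : #A ≤ L) (hL : 2 ≤ L)
    (hI : ∀ I : Finset V, x ∉ I → G.IsIndepSet ↑I → #I ≤ L) :
    #(linkPairs G A u) ≤ #A + L := by
  rw [← card_filter_add_card_filter_not (fun p : V × V => p.2 = x)]
  refine add_le_add (card_le_card_of_injOn Prod.fst (fun p hp => ?_) fun p hp q hq h => ?_)
    (card_filter_linkPairs_snd_ne_le hG hx hlarge hu hA hL hI)
  · exact (mem_linkPairs.1 (mem_filter.1 hp).1).1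
  · exact Prod.ext h (((mem_filter.1 hp).2).trans (mem_filter.1 hq).2.symm)

theorem two_mul_card_le {T : Finset (Finset V)} (hT : ∀ s ∈ T, G.IsNClique 3 s ∧ #(s ∩ A) = 2)
    {L : ℕ} (hA : #A ≤ L) (hL : 2 ≤ L) (hI : ∀ I : Finset V, x ∉ I → G.IsIndepSet ↑I → #I ≤ L) :
    2 * #T ≤ #A * (#A + L) :=
  calc 2 * #T = ∑ s ∈ T, #(A ∩ s) := by
        rw [sum_congr rfl fun s hs => by rw [inter_comm, (hT s hs).2], sum_const, smul_eq_mul,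
          mul_comm]
    _ ≤ #A * (#A + L) := sum_card_inter_le fun u hu =>
        (card_filter_mem_le_card_linkPairs hT hu).trans (card_linkPairs_le hG hx hlarge hu hA hL hI)

end LinkPairs

/-- There exist `δ₀ > 0` and `n₀` such that for all `0 < δ ≤ δ₀` and `n ≥ n₀`,
under the Setup and the triangle-set definitions with `|D̄| ≤ 8δn`, `|ℬ₂| ≤ n·|D̄|/3`. -/
theorem stmt16 : ∃ δ0 : ℝ, 0 < δ0 ∧ ∃ n0 : ℕ,
    ∀ δ : ℝ, 0 < δ → δ ≤ δ0 → ∀ n : ℕ, n0 ≤ n →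
    ∀ G : SimpleGraph (Fin n), _root_.Free C4expansion G →
    (∀ u v : Fin n, G.Adj u v → ∃ w : Fin n, G.Adj u w ∧ G.Adj v w) →
    ∀ (x : Fin n) (V1 V2 : Set (Fin n)),
    Disjoint V1 V2 → V1 ∪ V2 = {x}ᶜ →
    (∀ W1 W2 : Set (Fin n), Disjoint W1 W2 → W1 ∪ W2 = {x}ᶜ →
      crossEdges G W1 W2 ≤ crossEdges G V1 V2) →
    ((n : ℝ) ^ 2 / 4 - 2 * δ * (n : ℝ) ^ 2 ≤ (crossEdges G V1 V2 : ℝ)) →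
    ∀ D : Set (Fin n),
    D = {v : Fin n | v ≠ x ∧ G.Adj v x ∧
      (n : ℝ) / 200 ≤ (edgeTriangleDeg G v x : ℝ)} →
    ∀ Dbar : Set (Fin n), Dbar = ({x}ᶜ : Set (Fin n)) \ D →
    ((Dbar.ncard : ℝ) ≤ 8 * δ * (n : ℝ)) →
    ∀ S : SimpleGraph (Fin n),
    S = SimpleGraph.fromRel (fun u v => u = x ∨ (u ∈ V1 ∧ v ∈ V2)) →
    ∀ calB2 : Set (Finset (Fin n)),
    calB2 = {s : Finset (Fin n) |
      (G.IsNClique 3 s ∧ ¬ S.IsNClique 3 s) ∧ ((s : Set (Fin n)) ∩ Dbar).ncard = 2} →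
    (calB2.ncard : ℝ) ≤ (n : ℝ) * (Dbar.ncard : ℝ) / 3 := by
  classical
  -- `n ≥ 1200` gives `n / 200 ≥ 6`, and `δ ≤ 1/1000` gives `8δ + 1/2 + 2√(2δ) ≤ 2/3`.
  refine ⟨1 / 1000, by norm_num, 1200, ?_⟩
  rintro δ hδ hδ1 n hn G hG - x V1 V2 hdisj hunion - hcut D hD Dbar hDbar hDbarcard S - B hB
  lift Dbar to Finset (Fin n) using Dbar.toFinite with A
  lift B to Finset (Finset (Fin n)) using B.toFinite with T
  simp only [Set.ncard_coe_finset] at hDbarcard ⊢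
  have hnR : (1200 : ℝ) ≤ n := by exact_mod_cast hn
  set r := √(2 * δ)
  have hr2 : r ^ 2 = 2 * δ := Real.sq_sqrt (by positivity)
  have hr : r ≤ 1 / 20 := by nlinarith [Real.sqrt_nonneg (2 * δ)]
  have hx : x ∉ A := fun h => by simpa using (Set.ext_iff.1 hDbar x).1 h
  have hlarge : ∀ w ∉ A, w ≠ x → G.Adj w x ∧ 6 ≤ edgeTriangleDeg G w x := by
    intro w hwA hwx
    have hwD : w ∈ D := by
      by_contra h
      exact hwA (by rw [← Finset.mem_coe, hDbar]; exact ⟨hwx, h⟩)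
    rw [hD] at hwD
    exact ⟨hwD.2.1, by exact_mod_cast (show (6 : ℝ) ≤ edgeTriangleDeg G w x by linarith [hwD.2.2])⟩
  have hT : ∀ t ∈ T, G.IsNClique 3 t ∧ #(t ∩ A) = 2 := by
    intro t ht
    obtain ⟨⟨hclique, -⟩, hcard⟩ := (Set.ext_iff.1 hB t).1 ht
    rw [← Finset.coe_inter, Set.ncard_coe_finset] at hcard
    exact ⟨hclique, hcard⟩
  set L := ⌊(n : ℝ) / 2 + 2 * r * n⌋₊
  have hI : ∀ I : Finset (Fin n), x ∉ I → G.IsIndepSet ↑I → #I ≤ L := by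
    intro I hxI hI
    refine Nat.le_floor ?_
    rw [← Set.ncard_coe_finset]
    refine ncard_le_of_isIndepSet (Real.sqrt_nonneg _) ?_ (by rw [hr2]; exact hcut) hI ?_
    · have := Set.ncard_le_card (V1 ∪ V2)
      rw [Set.ncard_union_eq hdisj, Nat.card_eq_fintype_card, Fintype.card_fin] at this
      exact_mod_cast this
    · intro v hv
      rw [hunion]
      exact fun h => hxI (h ▸ hv)
  have hLR : (L : ℝ) ≤ n / 2 + 2 * r * n := Nat.floor_le (by positivity)
  have hAL : #A ≤ L := Nat.le_floor (by nlinarith [Real.sqrt_nonneg (2 * δ)])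
  have hL2 : 2 ≤ L := Nat.le_floor (by push_cast; nlinarith [Real.sqrt_nonneg (2 * δ)])
  have hcount : (2 * #T : ℝ) ≤ #A * (#A + L) := by
    exact_mod_cast two_mul_card_le hG hx hlarge hT hAL hL2 hI
  have hAL' : (#A : ℝ) + L ≤ 2 * n / 3 := by nlinarith
  nlinarith [mul_le_mul_of_nonneg_left hAL' (Nat.cast_nonneg (α := ℝ) #A)]
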